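/- Let N ≥ 2 be an integer, let γ > 0, ρ > 0, β > 0 be reals, and let δ be a real with 0 < δ < √2·N·√((N−1)/(3N+1)). For λ > 0 set d(λ) = √(γλ)·δ, R(λ) = ρ² + (8γN² − 4d(λ)ρ(3N+1))/(λ(N+1)²) − 4d(λ)²(3N+1)/(λ²(N−1)(N+1)²), a(λ) = (d(λ)(6N+2) − λ(N+1)²(ρ − √(R(λ))))/(4N²), h₂(λ) = 2a(λ)(N−1) + d(λ)(N−3) + λ(N²−1)(β+ρ), and h₄(λ) = 2(2d(λ) − (N−1)a(λ))²·(−a(λ)(N²+2N−3) + 4d(λ) − λ(N²−1)ρ)/(h₂(λ)·λ(N+1)²·(2h₂(λ) − λ(N²−1)(2β+ρ))) + ((N−1)d(λ) + 2a(λ)N)/(λ(N+1)²) + β + ρ. Then for all sufficiently small λ > 0 the quantities h₂(λ) and 2h₂(λ) − λ(N²−1)(2β+ρ) are strictly positive (so h₄(λ) is well defined), and lim_{λ→0⁺} √(λ/γ)·h₄(λ) = h₄⁰(N,δ). -/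

import Mathlib

open Filter

/-- `d(λ) = √(γλ)·δ`. -/
noncomputable def dCoef (γ δ lam : ℝ) : ℝ := Real.sqrt (γ * lam) * δ

/-- The discriminant `R(λ)` appearing in the explicit formula for `a(λ)`. -/
noncomputable def RCoef (N : ℕ) (γ ρ δ lam : ℝ) : ℝ :=
  ρ ^ 2 + (8 * γ * (N : ℝ) ^ 2 - 4 * dCoef γ δ lam * ρ * (3 * (N : ℝ) + 1))
      / (lam * ((N : ℝ) + 1) ^ 2)
    - 4 * (dCoef γ δ lam) ^ 2 * (3 * (N : ℝ) + 1)
      / (lam ^ 2 * ((N : ℝ) - 1) * ((N : ℝ) + 1) ^ 2)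

/-- The coefficient `a(λ)`. -/
noncomputable def aCoef (N : ℕ) (γ ρ δ lam : ℝ) : ℝ :=
  (dCoef γ δ lam * (6 * (N : ℝ) + 2)
      - lam * ((N : ℝ) + 1) ^ 2 * (ρ - Real.sqrt (RCoef N γ ρ δ lam)))
    / (4 * (N : ℝ) ^ 2)

/-- `h₂(λ) = 2a(λ)(N−1) + d(λ)(N−3) + λ(N²−1)(β+ρ)`. -/
noncomputable def h2Coef (N : ℕ) (γ ρ β δ lam : ℝ) : ℝ :=
  2 * aCoef N γ ρ δ lam * ((N : ℝ) - 1) + dCoef γ δ lam * ((N : ℝ) - 3)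
    + lam * ((N : ℝ) ^ 2 - 1) * (β + ρ)

/-- `h₄(λ)`. -/
noncomputable def h4Coef (N : ℕ) (γ ρ β δ lam : ℝ) : ℝ :=
  2 * (2 * dCoef γ δ lam - ((N : ℝ) - 1) * aCoef N γ ρ δ lam) ^ 2
      * (-(aCoef N γ ρ δ lam * ((N : ℝ) ^ 2 + 2 * (N : ℝ) - 3)) + 4 * dCoef γ δ lam
          - lam * ((N : ℝ) ^ 2 - 1) * ρ)
      / (h2Coef N γ ρ β δ lam * lam * ((N : ℝ) + 1) ^ 2
          * (2 * h2Coef N γ ρ β δ lam - lam * ((N : ℝ) ^ 2 - 1) * (2 * β + ρ)))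
    + (((N : ℝ) - 1) * dCoef γ δ lam + 2 * aCoef N γ ρ δ lam * (N : ℝ))
      / (lam * ((N : ℝ) + 1) ^ 2)
    + β + ρ

/-- `D̄(N,y) = √((2N³ − 2N² − (3N+1)y²)/((N−1)(N+1)²))`. -/
noncomputable def Dbar (N : ℕ) (y : ℝ) : ℝ :=
  Real.sqrt ((2 * (N : ℝ) ^ 3 - 2 * (N : ℝ) ^ 2 - (3 * (N : ℝ) + 1) * y ^ 2)
    / (((N : ℝ) - 1) * ((N : ℝ) + 1) ^ 2))

/-- `h₄⁰(N,y)`. -/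
noncomputable def h40 (N : ℕ) (y : ℝ) : ℝ :=
  (Dbar N y + y) / (N : ℝ)
    - ((N : ℝ) + 1) * (y - ((N : ℝ) - 1) * Dbar N y) ^ 2
        * (((N : ℝ) ^ 3 + 3 * (N : ℝ) ^ 2 - (N : ℝ) - 3) * Dbar N y
            + (3 * (N : ℝ) ^ 2 - 4 * (N : ℝ) - 3) * y)
        / (8 * (N : ℝ) ^ 2
            * (((N : ℝ) ^ 2 - 1) * Dbar N y + ((N : ℝ) ^ 2 - (N : ℝ) - 1) * y) ^ 2)

noncomputable def Pfun (N : ℕ) (γ ρ δ : ℝ) (s : ℝ) : ℝ :=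
  ρ ^ 2 * s ^ 2
    + (8 * γ * (N : ℝ) ^ 2 - 4 * Real.sqrt γ * s * δ * ρ * (3 * (N : ℝ) + 1))
        / ((N : ℝ) + 1) ^ 2
    - 4 * γ * δ ^ 2 * (3 * (N : ℝ) + 1) / (((N : ℝ) - 1) * ((N : ℝ) + 1) ^ 2)

noncomputable def Afun (N : ℕ) (γ ρ δ : ℝ) (s : ℝ) : ℝ :=
  (Real.sqrt γ * δ * (6 * (N : ℝ) + 2) - s * ((N : ℝ) + 1) ^ 2 * ρ
    + ((N : ℝ) + 1) ^ 2 * Real.sqrt (Pfun N γ ρ δ s)) / (4 * (N : ℝ) ^ 2)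

noncomputable def H2fun (N : ℕ) (γ ρ β δ : ℝ) (s : ℝ) : ℝ :=
  2 * Afun N γ ρ δ s * ((N : ℝ) - 1) + Real.sqrt γ * δ * ((N : ℝ) - 3)
    + s * ((N : ℝ) ^ 2 - 1) * (β + ρ)

noncomputable def Gfun (N : ℕ) (γ ρ β δ : ℝ) (s : ℝ) : ℝ :=
  (2 * (2 * Real.sqrt γ * δ - ((N : ℝ) - 1) * Afun N γ ρ δ s) ^ 2
      * (-(Afun N γ ρ δ s * ((N : ℝ) ^ 2 + 2 * (N : ℝ) - 3)) + 4 * Real.sqrt γ * δ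
          - s * ((N : ℝ) ^ 2 - 1) * ρ)
      / (H2fun N γ ρ β δ s * ((N : ℝ) + 1) ^ 2
          * (2 * H2fun N γ ρ β δ s - s * ((N : ℝ) ^ 2 - 1) * (2 * β + ρ)))
    + (((N : ℝ) - 1) * Real.sqrt γ * δ + 2 * Afun N γ ρ δ s * (N : ℝ)) / ((N : ℝ) + 1) ^ 2
    + s * (β + ρ)) / Real.sqrt γ

lemma dCoef_eq (γ δ s : ℝ) (hγ : 0 ≤ γ) (hs : 0 ≤ s) :
    dCoef γ δ (s ^ 2) = Real.sqrt γ * s * δ := by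
  unfold dCoef
  rw [Real.sqrt_mul hγ, Real.sqrt_sq hs]

lemma RCoef_eq (N : ℕ) (γ ρ δ s : ℝ) (hN : 2 ≤ N) (hγ : 0 ≤ γ) (hs : 0 < s) :
    RCoef N γ ρ δ (s ^ 2) = Pfun N γ ρ δ s / s ^ 2 := by
  have hN2 : (2:ℝ) ≤ (N:ℝ) := by exact_mod_cast hN
  have hN1 : ((N:ℝ) + 1) ≠ 0 := by nlinarith
  have hNm : ((N:ℝ) - 1) ≠ 0 := by nlinarith
  unfold RCoef Pfun
  rw [dCoef_eq γ δ s hγ hs.le]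
  have key : (Real.sqrt γ * s * δ) ^ 2 = γ * s ^ 2 * δ ^ 2 := by
    rw [mul_pow, mul_pow, Real.sq_sqrt hγ]
  rw [key]
  field_simp

lemma sqrt_RCoef_eq (N : ℕ) (γ ρ δ s : ℝ) (hN : 2 ≤ N) (hγ : 0 ≤ γ) (hs : 0 < s) :
    Real.sqrt (RCoef N γ ρ δ (s ^ 2)) = Real.sqrt (Pfun N γ ρ δ s) / s := by
  rw [RCoef_eq N γ ρ δ s hN hγ hs]
  rcases le_or_gt 0 (Pfun N γ ρ δ s) with h | h
  · rw [Real.sqrt_div h, Real.sqrt_sq hs.le]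
  · rw [Real.sqrt_eq_zero'.mpr (div_nonpos_of_nonpos_of_nonneg h.le (by positivity)),
      Real.sqrt_eq_zero'.mpr h.le, zero_div]

lemma aCoef_eq (N : ℕ) (γ ρ δ s : ℝ) (hN : 2 ≤ N) (hγ : 0 ≤ γ) (hs : 0 < s) :
    aCoef N γ ρ δ (s ^ 2) = s * Afun N γ ρ δ s := by
  have hN2 : (2:ℝ) ≤ (N:ℝ) := by exact_mod_cast hN
  have hN0 : ((N:ℝ)) ≠ 0 := by nlinarith
  unfold aCoef Afun
  rw [dCoef_eq γ δ s hγ hs.le, sqrt_RCoef_eq N γ ρ δ s hN hγ hs]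
  field_simp
  ring

lemma h2Coef_eq (N : ℕ) (γ ρ β δ s : ℝ) (hN : 2 ≤ N) (hγ : 0 ≤ γ) (hs : 0 < s) :
    h2Coef N γ ρ β δ (s ^ 2) = s * H2fun N γ ρ β δ s := by
  unfold h2Coef H2fun
  rw [dCoef_eq γ δ s hγ hs.le, aCoef_eq N γ ρ δ s hN hγ hs]
  ring

lemma h4_eq (N : ℕ) (γ ρ β δ s : ℝ) (hN : 2 ≤ N) (hγ : 0 < γ) (hs : 0 < s)
    (hH2 : H2fun N γ ρ β δ s ≠ 0)
    (hW : 2 * H2fun N γ ρ β δ s - s * ((N : ℝ) ^ 2 - 1) * (2 * β + ρ) ≠ 0) :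
    Real.sqrt (s ^ 2 / γ) * h4Coef N γ ρ β δ (s ^ 2) = Gfun N γ ρ β δ s := by
  have hN2 : (2:ℝ) ≤ (N:ℝ) := by exact_mod_cast hN
  have hN1 : ((N:ℝ) + 1) ≠ 0 := by nlinarith
  have hg : 0 < Real.sqrt γ := Real.sqrt_pos.mpr hγ
  have hsl : Real.sqrt (s ^ 2 / γ) = s / Real.sqrt γ := by
    rw [Real.sqrt_div (sq_nonneg s), Real.sqrt_sq hs.le]
  have hH2' : s * H2fun N γ ρ β δ s ≠ 0 := mul_ne_zero hs.ne' hH2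
  have hW2 : 2 * (s * H2fun N γ ρ β δ s) - s ^ 2 * ((N : ℝ) ^ 2 - 1) * (2 * β + ρ) ≠ 0 := by
    rw [show 2 * (s * H2fun N γ ρ β δ s) - s ^ 2 * ((N : ℝ) ^ 2 - 1) * (2 * β + ρ)
        = s * (2 * H2fun N γ ρ β δ s - s * ((N : ℝ) ^ 2 - 1) * (2 * β + ρ)) from by ring]
    exact mul_ne_zero hs.ne' hW
  unfold h4Coef Gfun
  rw [h2Coef_eq N γ ρ β δ s hN hγ.le hs, aCoef_eq N γ ρ δ s hN hγ.le hs,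
    dCoef_eq γ δ s hγ.le hs.le, hsl]
  field_simp
  ring


lemma sqrtP0 (N : ℕ) (γ ρ δ : ℝ) (hN : 2 ≤ N) (hγ : 0 ≤ γ) :
    Real.sqrt (Pfun N γ ρ δ 0) = 2 * Real.sqrt γ * Dbar N δ := by
  have hN2 : (2:ℝ) ≤ (N:ℝ) := by exact_mod_cast hN
  have hN1 : ((N:ℝ) + 1) ≠ 0 := by nlinarith
  have hNm : ((N:ℝ) - 1) ≠ 0 := by nlinarith
  have hP0 : Pfun N γ ρ δ 0 = (2 ^ 2 * γ) *
      ((2 * (N : ℝ) ^ 3 - 2 * (N : ℝ) ^ 2 - (3 * (N : ℝ) + 1) * δ ^ 2)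
        / (((N : ℝ) - 1) * ((N : ℝ) + 1) ^ 2)) := by
    unfold Pfun
    field_simp
    ring
  rw [hP0, Dbar, Real.sqrt_mul (by positivity), Real.sqrt_mul (by norm_num : (0:ℝ) ≤ 2 ^ 2),
    Real.sqrt_sq (by norm_num : (0:ℝ) ≤ 2)]
  try ring

lemma Afun0 (N : ℕ) (γ ρ δ : ℝ) (hN : 2 ≤ N) (hγ : 0 ≤ γ) :
    Afun N γ ρ δ 0 = Real.sqrt γ * ((3 * (N:ℝ) + 1) * δ + ((N:ℝ) + 1) ^ 2 * Dbar N δ)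
      / (2 * (N:ℝ) ^ 2) := by
  have hN2 : (2:ℝ) ≤ (N:ℝ) := by exact_mod_cast hN
  have hN0 : ((N:ℝ)) ≠ 0 := by nlinarith
  unfold Afun
  rw [sqrtP0 N γ ρ δ hN hγ]
  field_simp
  ring

lemma H2fun0 (N : ℕ) (γ ρ β δ : ℝ) (hN : 2 ≤ N) (hγ : 0 ≤ γ) :
    H2fun N γ ρ β δ 0 = Real.sqrt γ * ((N:ℝ) + 1)
      * (((N:ℝ) ^ 2 - 1) * Dbar N δ + ((N:ℝ) ^ 2 - (N:ℝ) - 1) * δ) / (N:ℝ) ^ 2 := by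
  have hN2 : (2:ℝ) ≤ (N:ℝ) := by exact_mod_cast hN
  have hN0 : ((N:ℝ)) ≠ 0 := by nlinarith
  unfold H2fun
  rw [Afun0 N γ ρ δ hN hγ]
  field_simp
  ring

lemma Gfun0 (N : ℕ) (γ ρ β δ : ℝ) (hN : 2 ≤ N) (hγ : 0 < γ) (hδ0 : 0 < δ) :
    Gfun N γ ρ β δ 0 = h40 N δ := by
  have hN2 : (2:ℝ) ≤ (N:ℝ) := by exact_mod_cast hN
  have hN0 : ((N:ℝ)) ≠ 0 := by nlinarith
  have hN1 : ((N:ℝ) + 1) ≠ 0 := by nlinarith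
  have hg : 0 < Real.sqrt γ := Real.sqrt_pos.mpr hγ
  have hD : 0 ≤ Dbar N δ := Real.sqrt_nonneg _
  have hK : 0 < ((N:ℝ) ^ 2 - 1) * Dbar N δ + ((N:ℝ) ^ 2 - (N:ℝ) - 1) * δ := by
    have h1 : (0:ℝ) ≤ ((N:ℝ) ^ 2 - 1) * Dbar N δ :=
      mul_nonneg (by nlinarith) hD
    have h2 : (0:ℝ) < ((N:ℝ) ^ 2 - (N:ℝ) - 1) * δ := mul_pos (by nlinarith) hδ0
    linarith
  have hK' := hK.ne'
  have hg' := hg.ne'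
  unfold Gfun h40
  rw [Afun0 N γ ρ δ hN hγ.le, H2fun0 N γ ρ β δ hN hγ.le]
  simp only [zero_mul, mul_zero, sub_zero, add_zero]
  field_simp
  ring

lemma Afun_cont (N : ℕ) (γ ρ δ : ℝ) : Continuous (Afun N γ ρ δ) := by
  unfold Afun Pfun; fun_prop

lemma H2fun_cont (N : ℕ) (γ ρ β δ : ℝ) : Continuous (H2fun N γ ρ β δ) := by
  have := Afun_cont N γ ρ δ
  unfold H2fun; fun_prop

/-- For small `λ > 0` the denominators `h₂(λ)` and
`2h₂(λ) − λ(N²−1)(2β+ρ)` are strictly positive, and `√(λ/γ)·h₄(λ) → h₄⁰(N,δ)` as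
`λ → 0⁺`. -/
theorem h4_asymptotics
    (N : ℕ) (hN : 2 ≤ N) (γ ρ β : ℝ) (hγ : 0 < γ) (hρ : 0 < ρ) (hβ : 0 < β)
    (δ : ℝ) (hδ0 : 0 < δ)
    (hδ : δ < Real.sqrt 2 * (N : ℝ) * Real.sqrt (((N : ℝ) - 1) / (3 * (N : ℝ) + 1))) :
    (∀ᶠ lam in nhdsWithin (0 : ℝ) (Set.Ioi 0),
      0 < h2Coef N γ ρ β δ lam ∧
      0 < 2 * h2Coef N γ ρ β δ lam - lam * ((N : ℝ) ^ 2 - 1) * (2 * β + ρ)) ∧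
    Tendsto (fun lam : ℝ => Real.sqrt (lam / γ) * h4Coef N γ ρ β δ lam)
      (nhdsWithin (0 : ℝ) (Set.Ioi 0)) (nhds (h40 N δ)) := by
  have hN2 : (2:ℝ) ≤ (N:ℝ) := by exact_mod_cast hN
  have hg : 0 < Real.sqrt γ := Real.sqrt_pos.mpr hγ
  have hD : 0 ≤ Dbar N δ := Real.sqrt_nonneg _
  -- positivity of H2fun at 0
  have hK : 0 < ((N:ℝ) ^ 2 - 1) * Dbar N δ + ((N:ℝ) ^ 2 - (N:ℝ) - 1) * δ := by
    have h1 : (0:ℝ) ≤ ((N:ℝ) ^ 2 - 1) * Dbar N δ := mul_nonneg (by nlinarith) hD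
    have h2 : (0:ℝ) < ((N:ℝ) ^ 2 - (N:ℝ) - 1) * δ := mul_pos (by nlinarith) hδ0
    linarith
  have hH20 : 0 < H2fun N γ ρ β δ 0 := by
    rw [H2fun0 N γ ρ β δ hN hγ.le]
    have : (0:ℝ) < (N:ℝ) + 1 := by nlinarith
    positivity
  -- tendsto of sqrt to 0 within Ioi 0
  have hst : Tendsto (fun lam : ℝ => Real.sqrt lam) (nhdsWithin (0:ℝ) (Set.Ioi 0)) (nhds 0) := by
    have h := Real.continuous_sqrt.tendsto 0
    rw [Real.sqrt_zero] at h
    exact h.mono_left nhdsWithin_le_nhds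
  have hH2t : Tendsto (fun lam : ℝ => H2fun N γ ρ β δ (Real.sqrt lam))
      (nhdsWithin (0:ℝ) (Set.Ioi 0)) (nhds (H2fun N γ ρ β δ 0)) :=
    ((H2fun_cont N γ ρ β δ).tendsto 0).comp hst
  have ev1 : ∀ᶠ lam in nhdsWithin (0:ℝ) (Set.Ioi 0),
      0 < H2fun N γ ρ β δ (Real.sqrt lam) := hH2t.eventually (eventually_gt_nhds hH20)
  have hWt : Tendsto (fun lam : ℝ => 2 * H2fun N γ ρ β δ (Real.sqrt lam)
        - Real.sqrt lam * ((N:ℝ) ^ 2 - 1) * (2 * β + ρ))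
      (nhdsWithin (0:ℝ) (Set.Ioi 0))
      (nhds (2 * H2fun N γ ρ β δ 0 - 0 * ((N:ℝ) ^ 2 - 1) * (2 * β + ρ))) := by
    exact ((hH2t.const_mul 2).sub (((hst.mul_const _).mul_const _)))
  have ev2 : ∀ᶠ lam in nhdsWithin (0:ℝ) (Set.Ioi 0),
      0 < 2 * H2fun N γ ρ β δ (Real.sqrt lam)
        - Real.sqrt lam * ((N:ℝ) ^ 2 - 1) * (2 * β + ρ) :=
    hWt.eventually (eventually_gt_nhds (by nlinarith))
  have ev0 : ∀ᶠ lam in nhdsWithin (0:ℝ) (Set.Ioi 0), (0:ℝ) < lam :=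
    eventually_mem_nhdsWithin
  constructor
  · filter_upwards [ev0, ev1, ev2] with lam h0 h1 h2
    have hs : 0 < Real.sqrt lam := Real.sqrt_pos.mpr h0
    have e : lam = Real.sqrt lam ^ 2 := (Real.sq_sqrt h0.le).symm
    constructor
    · calc 0 < Real.sqrt lam * H2fun N γ ρ β δ (Real.sqrt lam) := mul_pos hs h1
        _ = h2Coef N γ ρ β δ lam := by
            rw [← h2Coef_eq N γ ρ β δ (Real.sqrt lam) hN hγ.le hs, ← e]
    · calc (0:ℝ)
          < Real.sqrt lam * (2 * H2fun N γ ρ β δ (Real.sqrt lam)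
              - Real.sqrt lam * ((N:ℝ) ^ 2 - 1) * (2 * β + ρ)) := mul_pos hs h2
        _ = 2 * h2Coef N γ ρ β δ lam - lam * ((N:ℝ) ^ 2 - 1) * (2 * β + ρ) := by
            conv_rhs => rw [e, h2Coef_eq N γ ρ β δ (Real.sqrt lam) hN hγ.le hs]
            ring
  · have hGt : Tendsto (fun lam : ℝ => Gfun N γ ρ β δ (Real.sqrt lam))
        (nhdsWithin (0:ℝ) (Set.Ioi 0)) (nhds (h40 N δ)) := by
      have hGc : ContinuousAt (Gfun N γ ρ β δ) 0 := by
        have hden : H2fun N γ ρ β δ 0 * ((N:ℝ) + 1) ^ 2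
            * (2 * H2fun N γ ρ β δ 0 - 0 * ((N:ℝ) ^ 2 - 1) * (2 * β + ρ)) ≠ 0 := by
          have h1 : (0:ℝ) < ((N:ℝ) + 1) ^ 2 := by nlinarith
          have h2 : (0:ℝ) < 2 * H2fun N γ ρ β δ 0
              - 0 * ((N:ℝ) ^ 2 - 1) * (2 * β + ρ) := by nlinarith
          exact ne_of_gt (mul_pos (mul_pos hH20 h1) h2)
        have hAc := Afun_cont N γ ρ δ
        have hH2c := H2fun_cont N γ ρ β δ
        unfold Gfun
        apply ContinuousAt.div_const
        apply ContinuousAt.add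
        apply ContinuousAt.add
        · exact ContinuousAt.div (by fun_prop) (by fun_prop) hden
        · fun_prop
        · fun_prop
      have := hGc.tendsto.comp hst
      rwa [Gfun0 N γ ρ β δ hN hγ hδ0] at this
    refine hGt.congr' ?_
    filter_upwards [ev0, ev1, ev2] with lam h0 h1 h2
    have hs : 0 < Real.sqrt lam := Real.sqrt_pos.mpr h0
    have e : lam = Real.sqrt lam ^ 2 := (Real.sq_sqrt h0.le).symm
    calc Gfun N γ ρ β δ (Real.sqrt lam)
        = Real.sqrt (Real.sqrt lam ^ 2 / γ) * h4Coef N γ ρ β δ (Real.sqrt lam ^ 2) :=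
          (h4_eq N γ ρ β δ (Real.sqrt lam) hN hγ hs h1.ne' h2.ne').symm
      _ = Real.sqrt (lam / γ) * h4Coef N γ ρ β δ lam := by rw [← e]
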